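/- For every real polynomial v of degree at most N−2, one has ∫_{−1}^{1} v(τ) L_p'(τ) dτ = 0. -/

import Mathlib

open Polynomial

/-- `lagL τ i` is the `i`-th Lagrange basis polynomial (of degree `N - 1`)
for the nodes `τ 0, …, τ (N-1)`, satisfying `(lagL τ i).eval (τ j) = δᵢⱼ`. -/
noncomputable def lagL {N : ℕ} (τ : Fin N → ℝ) (i : Fin N) : ℝ[X] :=
  Lagrange.basis Finset.univ τ i

/-- `lagLp τ` is the polynomial `L_p(x) = ∏ᵢ (x - τᵢ)`. -/
noncomputable def lagLp {N : ℕ} (τ : Fin N → ℝ) : ℝ[X] :=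
  ∏ i, (X - C (τ i))

/-- The differentiation matrix `D`, with `D i j = L_j'(τ i)`. -/
noncomputable def matD {N : ℕ} (τ : Fin N → ℝ) : Matrix (Fin N) (Fin N) ℝ :=
  fun i j => (derivative (lagL τ j)).eval (τ i)

/-- The vector `D_p`, with `(D_p) i = L_p'(τ i)`. -/
noncomputable def vecDp {N : ℕ} (τ : Fin N → ℝ) : Fin N → ℝ :=
  fun i => (derivative (lagLp τ)).eval (τ i)

/-- Columns `2, …, N+1` (in 1-based numbering) of the augmented differentiation
matrix `D̃ = [D  D_p]`: column `j` (0-based, `j < N - 1`) is column `j + 1` of `D`,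
and the last column is `D_p`. -/
noncomputable def matDtil2 {N : ℕ} (τ : Fin N → ℝ) : Matrix (Fin N) (Fin N) ℝ :=
  fun i j => if h : (j : ℕ) + 1 < N then matD τ i ⟨(j : ℕ) + 1, h⟩ else vecDp τ i

/-- The quadrature rule with nodes `τ` and weights `w` integrates exactly all
polynomials of degree at most `2 * N - 3` over `[-1, 1]`. -/
def IsQuadrature {N : ℕ} (τ : Fin N → ℝ) (w : Fin N → ℝ) : Prop :=
  ∀ p : ℝ[X], p.natDegree ≤ 2 * N - 3 →
    ∑ i, w i * p.eval (τ i) = ∫ t in (-1 : ℝ)..1, p.eval t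

/-- The integration matrix `A` with rows indexed (0-based) by `i : Fin (N-1)`
corresponding to the node `τ (i+1)`: `A i j = ∫_{-1}^{τ (i+1)} L_j(t) dt`. -/
noncomputable def matA {N : ℕ} (τ : Fin N → ℝ) : Matrix (Fin (N - 1)) (Fin N) ℝ :=
  fun i j => ∫ t in (-1 : ℝ)..(τ ⟨(i : ℕ) + 1, by have := i.isLt; omega⟩), (lagL τ j).eval t

/-- The row vector `A_p`, with `(A_p) j = (1/N) ∏_{k ≠ j} 1 / (τ j - τ k)`. -/
noncomputable def rowAp {N : ℕ} (τ : Fin N → ℝ) : Fin N → ℝ :=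
  fun j => (1 / (N : ℝ)) * ∏ k ∈ Finset.univ.erase j, (τ j - τ k)⁻¹

/-- The matrix `Ã` obtained by stacking `A` on top of the row vector `A_p`. -/
noncomputable def matAtil {N : ℕ} (τ : Fin N → ℝ) : Matrix (Fin N) (Fin N) ℝ :=
  fun i j => if h : (i : ℕ) + 1 < N then matA τ ⟨(i : ℕ), by omega⟩ j else rowAp τ j

/-- The adjoint integration matrix `A† = W⁻¹ Aᵀ W_{2:N}`, with columns indexed
(0-based) by `j : Fin (N-1)` corresponding to the node `τ (j+1)`. -/
noncomputable def matAdag {N : ℕ} (τ : Fin N → ℝ) (w : Fin N → ℝ) :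
    Matrix (Fin N) (Fin (N - 1)) ℝ :=
  fun i j => (w i)⁻¹ * matA τ j i * w ⟨(j : ℕ) + 1, by have := j.isLt; omega⟩

/-- `polyM τ k` is the Lagrange basis polynomial (of degree `N - 3`) for the
interior nodes `τ 1, …, τ (N-2)`, satisfying `(polyM τ k).eval (τ m) = δₖₘ`
for interior indices `m`. -/
noncomputable def polyM {N : ℕ} (τ : Fin N → ℝ) (k : Fin N) : ℝ[X] :=
  Lagrange.basis (Finset.univ.filter fun m : Fin N => 0 < (m : ℕ) ∧ (m : ℕ) < N - 1) τ k

/-- The polynomial `λ(x) = ∑ᵢ (A† r)ᵢ Lᵢ(x)`. -/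
noncomputable def lamP {N : ℕ} (τ : Fin N → ℝ) (w : Fin N → ℝ) (r : Fin (N - 1) → ℝ) : ℝ[X] :=
  ∑ i, C ((matAdag τ w).mulVec r i) * lagL τ i

/-!
Integrate by parts: `∫ v L_p' = [v L_p]₋₁¹ - ∫ v' L_p`. The boundary term vanishes because `±1`
are nodes, and `v' L_p` has degree at most `2N - 3` and vanishes at every node, so the quadrature
rule integrates it to `0`.
-/

theorem Polynomial.integral_eval_mul_derivative (p q : ℝ[X]) (a b : ℝ) :
    ∫ t in a..b, p.eval t * (derivative q).eval t =
      p.eval b * q.eval b - p.eval a * q.eval a - ∫ t in a..b, (derivative p).eval t * q.eval t :=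
  intervalIntegral.integral_mul_deriv_eq_deriv_mul (fun x _ ↦ p.hasDerivAt x)
    (fun x _ ↦ q.hasDerivAt x) ((derivative p).continuous.intervalIntegrable _ _)
    ((derivative q).continuous.intervalIntegrable _ _)

theorem lagLp_eval_self {N : ℕ} (τ : Fin N → ℝ) (i : Fin N) : (lagLp τ).eval (τ i) = 0 := by
  simp only [lagLp, eval_prod, eval_sub, eval_X, eval_C]
  exact Finset.prod_eq_zero (Finset.mem_univ i) (sub_self _)

theorem natDegree_lagLp {N : ℕ} (τ : Fin N → ℝ) : (lagLp τ).natDegree = N := by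
  rw [lagLp, natDegree_prod_of_monic _ _ fun i _ ↦ monic_X_sub_C (τ i)]
  simp

theorem IsQuadrature.integral_eq_zero_of_eval_eq_zero {N : ℕ} {τ w : Fin N → ℝ}
    (hquad : IsQuadrature τ w) {p : ℝ[X]} (hp : p.natDegree ≤ 2 * N - 3)
    (hzero : ∀ i, p.eval (τ i) = 0) : ∫ t in (-1 : ℝ)..1, p.eval t = 0 := by
  rw [← hquad p hp]
  simp [hzero]

/-- For every polynomial `v` of degree at most `N - 2`,
`∫_{-1}^{1} v(t) L_p'(t) dt = 0`. -/
theorem stmt3 (N : ℕ) (hN : 3 ≤ N) (τ : Fin N → ℝ)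
    (h0 : τ ⟨0, by omega⟩ = -1) (h1 : τ ⟨N - 1, by omega⟩ = 1) (w : Fin N → ℝ) (hquad : IsQuadrature τ w) :
    ∀ v : ℝ[X], v.natDegree ≤ N - 2 →
      (∫ t in (-1 : ℝ)..1, v.eval t * (derivative (lagLp τ)).eval t) = 0 := by
  intro v hv
  have hdeg : (derivative v * lagLp τ).natDegree ≤ 2 * N - 3 :=
    calc (derivative v * lagLp τ).natDegree
        ≤ (derivative v).natDegree + (lagLp τ).natDegree := natDegree_mul_le
      _ ≤ (v.natDegree - 1) + N := by rw [natDegree_lagLp]; gcongr; exact natDegree_derivative_le v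
      _ ≤ 2 * N - 3 := by omega
  have hinterior : ∫ t in (-1 : ℝ)..1, (derivative v).eval t * (lagLp τ).eval t = 0 := by
    simpa only [eval_mul] using hquad.integral_eq_zero_of_eval_eq_zero hdeg
      fun i ↦ by rw [eval_mul, lagLp_eval_self, mul_zero]
  rw [integral_eval_mul_derivative, hinterior, ← h0, ← h1, lagLp_eval_self, lagLp_eval_self]
  ring
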